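/- arXiv:2011.06618 — 5 statements merged into one kernel-verified Lean document; each statement's English description precedes it below -/
import Mathlib

section
/- Let (ϖ_n)_{n∈ℕ} be a stick-breaking process on [0,1] based on the uniform law U(0,1), i.e. L_0 = 1, ϖ_n = L_{n-1}·U_n and L_n = L_{n-1} − ϖ_n where (U_n) are i.i.d. uniform on (0,1). Then for any measurable function φ : (0,1) → [0,∞), we have ∑_{n∈ℕ} E[φ(ϖ_n)] = ∫_0^1 φ(x)/x dx. -/
/-!
Since `1 - U` is again uniform, `L n = ∏_{k<n} (1 - U k)` and `w n = L n * U n` are products of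
`n` and `n + 1` independent uniforms. Multiplying a variable with density `ρ` on `(0,1)` by an
independent uniform gives the density `y ↦ ∫_y^1 ρ x / x dx`, which turns `(-log x)^n / n!` into
`(-log x)^(n+1) / (n+1)!`; so `w n` has density `(-log x)^n / n!`. These densities sum to
`exp (-log x) = 1 / x`, and monotone convergence exchanges the sum with the integral.
-/

open MeasureTheory ProbabilityTheory Set
open scoped ENNReal

local notation "𝕌" => volume.restrict (Ioo (0:ℝ) 1)

namespace StickBreaking

theorem map_one_sub_uniform : (𝕌).map (fun v => 1 - v) = 𝕌 := by
  have hpre : (fun v : ℝ => 1 - v) ⁻¹' Ioo 0 1 = Ioo 0 1 := by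
    ext v
    simp only [mem_preimage, mem_Ioo]
    constructor <;> intro h <;> constructor <;> linarith [h.1, h.2]
  conv_lhs => rw [← hpre]
  rw [← Measure.restrict_map (by fun_prop) measurableSet_Ioo, Measure.map_sub_left_eq_self]

theorem setLIntegral_Ioo_comp_const_mul {x : ℝ} (hx : 0 < x) {f : ℝ → ℝ≥0∞} (hf : Measurable f) :
    ∫⁻ v in Ioo 0 1, f (x * v) = ENNReal.ofReal x⁻¹ * ∫⁻ y in Ioo 0 x, f y := by
  have hpre : (x * ·) ⁻¹' Ioo 0 x = Ioo 0 1 := by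
    rw [preimage_const_mul_Ioo₀ _ _ hx, zero_div, div_self hx.ne']
  rw [← lintegral_map hf (measurable_const_mul x), ← hpre,
    ← Measure.restrict_map (measurable_const_mul x) measurableSet_Ioo,
    Real.map_volume_mul_left hx.ne', abs_of_pos (inv_pos.mpr hx), Measure.restrict_smul,
    lintegral_smul_measure, smul_eq_mul]

theorem lintegral_Ioo_Ioo_swap {a b : ℝ} {g : ℝ → ℝ → ℝ≥0∞}
    (hg : Measurable (Function.uncurry g)) :
    ∫⁻ x in Ioo a b, ∫⁻ y in Ioo a x, g x y = ∫⁻ y in Ioo a b, ∫⁻ x in Ioo y b, g x y := by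
  set G : ℝ → ℝ → ℝ≥0∞ := fun x y => if y < x then g x y else 0
  have hG : Measurable (Function.uncurry G) :=
    Measurable.ite (measurableSet_lt measurable_snd measurable_fst) hg measurable_const
  have inner_left : ∀ x ∈ Ioo a b, ∫⁻ y in Ioo a x, g x y = ∫⁻ y in Ioo a b, G x y := by
    intro x hx
    have : (fun y => G x y) = (Iio x).indicator (g x) := by ext y; simp [G, indicator]
    rw [this, lintegral_indicator measurableSet_Iio, Measure.restrict_restrict measurableSet_Iio,
      Iio_inter_Ioo, min_eq_left hx.2.le]
  have inner_right : ∀ y ∈ Ioo a b, ∫⁻ x in Ioo y b, g x y = ∫⁻ x in Ioo a b, G x y := by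
    intro y hy
    have : (fun x => G x y) = (Ioi y).indicator (fun x => g x y) := by ext x; simp [G, indicator]
    rw [this, lintegral_indicator measurableSet_Ioi, Measure.restrict_restrict measurableSet_Ioi,
      Ioi_inter_Ioo, max_eq_left hy.1.le]
  rw [setLIntegral_congr_fun measurableSet_Ioo inner_left,
    lintegral_lintegral_swap hG.aemeasurable, setLIntegral_congr_fun measurableSet_Ioo inner_right]

-- The density on `(0,1)` of a product of `n + 1` independent U(0,1) variables,
-- i.e. of `exp (-G)` with `G ∼ Gamma(n + 1, 1)`.
noncomputable def productUniformDensity (n : ℕ) (x : ℝ) : ℝ≥0∞ :=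
  ENNReal.ofReal ((-Real.log x) ^ n / n.factorial)

theorem measurable_productUniformDensity (n : ℕ) : Measurable (productUniformDensity n) := by
  unfold productUniformDensity
  fun_prop

theorem productUniformDensity_zero : productUniformDensity 0 = 1 := by
  ext x
  simp [productUniformDensity]

theorem tsum_productUniformDensity {x : ℝ} (hx0 : 0 < x) (hx1 : x ≤ 1) :
    ∑' n, productUniformDensity n x = ENNReal.ofReal x⁻¹ := by
  have hlog : 0 ≤ -Real.log x := neg_nonneg.mpr (Real.log_nonpos hx0.le hx1)
  have hexp : ∑' n : ℕ, (-Real.log x) ^ n / n.factorial = x⁻¹ := by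
    rw [← congrFun NormedSpace.exp_eq_tsum_div, ← Real.exp_eq_exp_ℝ, Real.exp_neg, Real.exp_log hx0]
  rw [← hexp, ENNReal.ofReal_tsum_of_nonneg (fun n => by positivity)
    (Real.summable_pow_div_factorial _)]
  rfl

theorem hasDerivAt_neg_log_pow_succ_div_factorial (n : ℕ) {x : ℝ} (hx : 0 < x) :
    HasDerivAt (fun x => (-Real.log x) ^ (n + 1) / (n + 1).factorial)
      (-((-Real.log x) ^ n / n.factorial * x⁻¹)) x := by
  refine (((Real.hasDerivAt_log hx.ne').neg.pow (n + 1)).div_const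
    ((n + 1).factorial : ℝ)).congr_deriv ?_
  rw [Pi.neg_apply, Nat.factorial_succ]
  push_cast
  field_simp

theorem setLIntegral_productUniformDensity_mul_inv (n : ℕ) {y : ℝ} (hy0 : 0 < y) (hy1 : y ≤ 1) :
    ∫⁻ x in Ioo y 1, productUniformDensity n x * ENNReal.ofReal x⁻¹
      = productUniformDensity (n + 1) y := by
  set g : ℝ → ℝ := fun x => (-Real.log x) ^ n / n.factorial * x⁻¹
  have hg_cont : ContinuousOn g (Icc y 1) := by
    have : ∀ x ∈ Icc y 1, x ≠ 0 := fun x hx => (hy0.trans_le hx.1).ne'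
    exact ((Real.continuousOn_log.mono fun x hx => this x hx).neg.pow n).div_const _ |>.mul
      (continuousOn_id.inv₀ this)
  have hg_nonneg : ∀ x ∈ Ioo y 1, 0 ≤ g x := fun x hx => by
    have := neg_nonneg.mpr (Real.log_nonpos (hy0.trans hx.1).le hx.2.le)
    have := hy0.trans hx.1
    positivity
  have hFTC : ∫ x in y..1, g x = (-Real.log y) ^ (n + 1) / (n + 1).factorial := by
    rw [← neg_neg (∫ x in y..1, g x), ← intervalIntegral.integral_neg,
      intervalIntegral.integral_eq_sub_of_hasDerivAt
        (fun x hx => hasDerivAt_neg_log_pow_succ_div_factorial n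
          (hy0.trans_le (uIcc_of_le hy1 ▸ hx).1))
        (hg_cont.neg.intervalIntegrable_of_Icc hy1)]
    simp
  calc ∫⁻ x in Ioo y 1, productUniformDensity n x * ENNReal.ofReal x⁻¹
      = ∫⁻ x in Ioo y 1, ENNReal.ofReal (g x) := by
        refine setLIntegral_congr_fun measurableSet_Ioo fun x hx => ?_
        have := neg_nonneg.mpr (Real.log_nonpos (hy0.trans hx.1).le hx.2.le)
        rw [productUniformDensity, ← ENNReal.ofReal_mul (by positivity)]
    _ = ENNReal.ofReal (∫ x in Ioo y 1, g x) :=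
        (ofReal_integral_eq_lintegral_ofReal (hg_cont.integrableOn_Icc.mono_set Ioo_subset_Icc_self)
          ((ae_restrict_mem measurableSet_Ioo).mono hg_nonneg)).symm
    _ = productUniformDensity (n + 1) y := by
        rw [← integral_Ioc_eq_integral_Ioo, ← intervalIntegral.integral_of_le hy1, hFTC,
          productUniformDensity]

theorem lintegral_mul_withDensity_prod_uniform {ρ : ℝ → ℝ≥0∞} (hρ : Measurable ρ)
    {f : ℝ → ℝ≥0∞} (hf : Measurable f) :
    ∫⁻ p, f (p.1 * p.2) ∂(((𝕌).withDensity ρ).prod 𝕌)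
      = ∫⁻ y in Ioo 0 1, (∫⁻ x in Ioo y 1, ρ x * ENNReal.ofReal x⁻¹) * f y := by
  have hf_mul : Measurable fun p : ℝ × ℝ => f (p.1 * p.2) := by fun_prop
  calc ∫⁻ p, f (p.1 * p.2) ∂(((𝕌).withDensity ρ).prod 𝕌)
      = ∫⁻ x in Ioo 0 1, ρ x * ∫⁻ v in Ioo 0 1, f (x * v) := by
        rw [lintegral_prod _ hf_mul.aemeasurable,
          lintegral_withDensity_eq_lintegral_mul _ hρ hf_mul.lintegral_prod_right']
        rfl
    _ = ∫⁻ x in Ioo 0 1, ∫⁻ y in Ioo 0 x, ρ x * ENNReal.ofReal x⁻¹ * f y := by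
        refine setLIntegral_congr_fun measurableSet_Ioo fun x hx => ?_
        rw [setLIntegral_Ioo_comp_const_mul hx.1 hf, lintegral_const_mul _ hf, mul_assoc]
    _ = ∫⁻ y in Ioo 0 1, ∫⁻ x in Ioo y 1, ρ x * ENNReal.ofReal x⁻¹ * f y :=
        lintegral_Ioo_Ioo_swap (by fun_prop)
    _ = ∫⁻ y in Ioo 0 1, (∫⁻ x in Ioo y 1, ρ x * ENNReal.ofReal x⁻¹) * f y := by
        refine setLIntegral_congr_fun measurableSet_Ioo fun y _ => ?_
        rw [lintegral_mul_const _ (by fun_prop)]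

theorem map_mul_withDensity_prod_uniform (n : ℕ) :
    (((𝕌).withDensity (productUniformDensity n)).prod 𝕌).map (fun p => p.1 * p.2)
      = (𝕌).withDensity (productUniformDensity (n + 1)) := by
  refine Measure.ext_of_lintegral _ fun f hf => ?_
  rw [lintegral_map hf (by fun_prop),
    lintegral_mul_withDensity_prod_uniform (measurable_productUniformDensity n) hf,
    lintegral_withDensity_eq_lintegral_mul _ (measurable_productUniformDensity _) hf]
  exact setLIntegral_congr_fun measurableSet_Ioo fun y hy => by
    rw [setLIntegral_productUniformDensity_mul_inv n hy.1 hy.2.le]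
    rfl

variable {Ω : Type*} [MeasurableSpace Ω] {μ : Measure Ω}

theorem map_one_sub_of_map_eq_uniform {V : Ω → ℝ} (hV : Measurable V) (hV_law : μ.map V = 𝕌) :
    μ.map (1 - V) = 𝕌 := by
  rw [← map_one_sub_uniform, ← hV_law, Measure.map_map (by fun_prop) hV]
  rfl

theorem map_mul_of_indepFun [IsFiniteMeasure μ] {X Y : Ω → ℝ} (hX : Measurable X)
    (hY : Measurable Y) (hXY : IndepFun X Y μ) {n : ℕ}
    (hX_law : μ.map X = (𝕌).withDensity (productUniformDensity n)) (hY_law : μ.map Y = 𝕌) :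
    μ.map (X * Y) = (𝕌).withDensity (productUniformDensity (n + 1)) := by
  rw [← map_mul_withDensity_prod_uniform, ← hX_law, ← hY_law,
    ← (indepFun_iff_map_prod_eq_prod_map_map hX.aemeasurable hY.aemeasurable).mp hXY,
    Measure.map_map (by fun_prop) (hX.prodMk hY)]
  rfl

variable {U L : ℕ → Ω → ℝ}

theorem measurable_stick (hU : ∀ n, Measurable (U n)) (hL0 : L 0 = 1)
    (hL : ∀ n, L (n + 1) = L n * (1 - U n)) (n : ℕ) : Measurable (L n) := by
  induction n with
  | zero => exact hL0 ▸ measurable_const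
  | succ n ih => exact hL n ▸ ih.mul ((hU n).const_sub 1)

theorem indepFun_stick_one_sub (hU : ∀ n, Measurable (U n)) (hU_indep : iIndepFun U μ)
    (hL0 : L 0 = 1) (hL : ∀ n, L (n + 1) = L n * (1 - U n)) (n : ℕ) :
    IndepFun (L n) (1 - U n) μ := by
  have hL_prod : ∀ m, L m = ∏ k ∈ Finset.range m, (1 - U k) := by
    intro m
    induction m with
    | zero => rw [hL0, Finset.prod_range_zero]
    | succ m ih => rw [hL, ih, Finset.prod_range_succ]
  rw [hL_prod n]
  exact (hU_indep.comp (fun _ x => 1 - x) fun _ => by fun_prop).indepFun_prod_range_succ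
    (fun k => (hU k).const_sub 1) n

theorem indepFun_stick (hU : ∀ n, Measurable (U n)) (hU_indep : iIndepFun U μ)
    (hL0 : L 0 = 1) (hL : ∀ n, L (n + 1) = L n * (1 - U n)) (n : ℕ) :
    IndepFun (L n) (U n) μ := by
  simpa [Function.comp_def] using
    (indepFun_stick_one_sub hU hU_indep hL0 hL n).comp measurable_id (measurable_const_sub 1)

theorem map_stick_mul [IsFiniteMeasure μ] (hU : ∀ n, Measurable (U n))
    (hU_indep : iIndepFun U μ) (hU_law : ∀ n, μ.map (U n) = 𝕌) (hL0 : L 0 = 1)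
    (hL : ∀ n, L (n + 1) = L n * (1 - U n)) (n : ℕ) {Y : Ω → ℝ} (hY : Measurable Y)
    (hLY : IndepFun (L n) Y μ) (hY_law : μ.map Y = 𝕌) :
    μ.map (L n * Y) = (𝕌).withDensity (productUniformDensity n) := by
  induction n generalizing Y with
  | zero => rw [hL0, one_mul, hY_law, productUniformDensity_zero, withDensity_one]
  | succ n ih =>
    have hL_law : μ.map (L (n + 1)) = (𝕌).withDensity (productUniformDensity n) := by
      rw [hL n]
      exact ih ((hU n).const_sub 1) (indepFun_stick_one_sub hU hU_indep hL0 hL n)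
        (map_one_sub_of_map_eq_uniform (hU n) (hU_law n))
    exact map_mul_of_indepFun (measurable_stick hU hL0 hL _) hY hLY hL_law hY_law

end StickBreaking

open StickBreaking

theorem stick_breaking_moment_identity_general
    {Ω : Type*} [MeasurableSpace Ω] (μ : Measure Ω) [IsProbabilityMeasure μ]
    (U L w : ℕ → Ω → ℝ)
    (hUmeas : ∀ n, Measurable (U n))
    (hUindep : iIndepFun U μ)
    (hUlaw : ∀ n, Measure.map (U n) μ = volume.restrict (Set.Ioo (0:ℝ) 1))
    (hL0 : ∀ ω, L 0 ω = 1)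
    (hw : ∀ n ω, w n ω = L n ω * U n ω)
    (hL : ∀ n ω, L (n + 1) ω = L n ω - w n ω)
    (φ : ℝ → ℝ) (hφ : Measurable φ) :
    ∑' n : ℕ, ∫⁻ ω, ENNReal.ofReal (φ (w n ω)) ∂μ
      = ∫⁻ x in Set.Ioo (0:ℝ) 1, ENNReal.ofReal (φ x / x) := by
  have hw' : ∀ n, w n = L n * U n := fun n => funext (hw n)
  have hL' : ∀ n, L (n + 1) = L n * (1 - U n) := fun n => funext fun ω => by
    simp only [hL, hw, Pi.mul_apply, Pi.sub_apply, Pi.one_apply]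
    ring
  have hw_law : ∀ n, μ.map (w n) = (𝕌).withDensity (productUniformDensity n) := fun n => by
    rw [hw']
    exact map_stick_mul hUmeas hUindep hUlaw (funext hL0) hL' n (hUmeas n)
      (indepFun_stick hUmeas hUindep (funext hL0) hL' n) (hUlaw n)
  have hw_meas : ∀ n, Measurable (w n) := fun n =>
    hw' n ▸ (measurable_stick hUmeas (funext hL0) hL' n).mul (hUmeas n)
  calc ∑' n : ℕ, ∫⁻ ω, ENNReal.ofReal (φ (w n ω)) ∂μ
      = ∑' n : ℕ, ∫⁻ x in Ioo 0 1, productUniformDensity n x * ENNReal.ofReal (φ x) := by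
        congr with n
        rw [← lintegral_map (f := fun x => ENNReal.ofReal (φ x)) (by fun_prop) (hw_meas n), hw_law,
          lintegral_withDensity_eq_lintegral_mul _ (measurable_productUniformDensity n)
            (by fun_prop)]
        rfl
    _ = ∫⁻ x in Ioo 0 1, (∑' n, productUniformDensity n x) * ENNReal.ofReal (φ x) := by
        rw [← lintegral_tsum fun n =>
          ((measurable_productUniformDensity n).fun_mul (by fun_prop)).aemeasurable]
        simp_rw [ENNReal.tsum_mul_right]
    _ = ∫⁻ x in Ioo 0 1, ENNReal.ofReal (φ x / x) :=
        setLIntegral_congr_fun measurableSet_Ioo fun x hx => by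
          rw [tsum_productUniformDensity hx.1 hx.2.le,
            ← ENNReal.ofReal_mul (inv_nonneg.mpr hx.1.le), inv_mul_eq_div]

/-- Stick-breaking moment identity: if `L 0 = 1`, `w n = L n * U n`,
`L (n+1) = L n - w n` with `(U n)` i.i.d. uniform on `(0,1)` (so `w n`
is the `(n+1)`-st stick `ϖ_{n+1}`), then for every measurable `φ ≥ 0` on `(0,1)`,
`∑ₙ E[φ(ϖₙ)] = ∫₀¹ φ(x)/x dx`. -/
theorem stick_breaking_moment_identity
    {Ω : Type*} [MeasurableSpace Ω] (μ : Measure Ω) [IsProbabilityMeasure μ]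
    (U L w : ℕ → Ω → ℝ)
    (hUmeas : ∀ n, Measurable (U n))
    (hUindep : iIndepFun U μ)
    (hUlaw : ∀ n, Measure.map (U n) μ = volume.restrict (Set.Ioo (0:ℝ) 1))
    (hL0 : ∀ ω, L 0 ω = 1)
    (hw : ∀ n ω, w n ω = L n ω * U n ω)
    (hL : ∀ n ω, L (n + 1) ω = L n ω - w n ω)
    (φ : ℝ → ℝ) (hφ : Measurable φ) (hφ0 : ∀ x ∈ Set.Ioo (0:ℝ) 1, 0 ≤ φ x) :
    ∑' n : ℕ, ∫⁻ ω, ENNReal.ofReal (φ (w n ω)) ∂μ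
      = ∫⁻ x in Set.Ioo (0:ℝ) 1, ENNReal.ofReal (φ x / x) :=
  stick_breaking_moment_identity_general μ U L w hUmeas hUindep hUlaw hL0 hw hL φ hφ
end

section
/- Let (ξ, ζ) and (ξ', ζ') be random vectors in ℝ^n × ℝ, let y ∈ ℝ, K, M ≥ 0, and let h : ℝ^n → ℝ be K-Lipschitz (with respect to the ℓ¹-norm) with 0 ≤ h ≤ M. Then for any p, r > 0: E|h(ξ)·1{ζ ≥ y} − h(ξ')·1{ζ' ≥ y}| ≤ K·E‖ξ − ξ'‖ + M·P(|ζ − y| ≤ r) + M·r^{-p}·E[|ζ − ζ'|^p]. -/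
open MeasureTheory

/-!
Write `h(ξ)1{ζ ≥ y} − h(ξ')1{ζ' ≥ y} = (h(ξ) − h(ξ'))1{ζ ≥ y} + h(ξ')(1{ζ ≥ y} − 1{ζ' ≥ y})`.
The first term is at most `K‖ξ − ξ'‖`. The two indicators can only differ if `ζ` lies within `r`
of `y` or if `|ζ − ζ'| > r`, and the second event is controlled pointwise by
`r^{-p}|ζ − ζ'|^p` (Markov's inequality before integration). Integrating the pointwise bound
gives the theorem.
-/

lemma abs_ite_one_sub_ite_one_le (y z z' r : ℝ) :
    |(if y ≤ z then (1 : ℝ) else 0) - (if y ≤ z' then 1 else 0)|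
      ≤ (if |z - y| ≤ r then 1 else 0) + (if r < |z - z'| then 1 else 0) := by
  split_ifs <;> grind

lemma abs_ite_sub_ite_le {a a' M y z z' r : ℝ} (ha' : 0 ≤ a') (ha'M : a' ≤ M) :
    |(if y ≤ z then a else 0) - (if y ≤ z' then a' else 0)|
      ≤ |a - a'| + (if |z - y| ≤ r then M else 0) + (if r < |z - z'| then M else 0) := by
  set χ : ℝ := if y ≤ z then 1 else 0
  set χ' : ℝ := if y ≤ z' then 1 else 0
  have hsplit : (if y ≤ z then a else 0) - (if y ≤ z' then a' else 0)
      = (a - a') * χ + a' * (χ - χ') := by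
    simp only [χ, χ']; split_ifs <;> ring
  have hχ : |χ| ≤ 1 := by simp only [χ]; split_ifs <;> norm_num
  have hindicator : |χ - χ'| ≤ (if |z - y| ≤ r then 1 else 0) + (if r < |z - z'| then 1 else 0) :=
    abs_ite_one_sub_ite_one_le y z z' r
  have hM : (if |z - y| ≤ r then M else 0) + (if r < |z - z'| then M else 0)
      = M * ((if |z - y| ≤ r then 1 else 0) + (if r < |z - z'| then 1 else 0)) := by
    split_ifs <;> ring
  rw [hsplit, add_assoc, hM]
  calc |(a - a') * χ + a' * (χ - χ')|
      ≤ |a - a'| * |χ| + |a'| * |χ - χ'| := by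
        rw [← abs_mul, ← abs_mul]; exact abs_add_le _ _
    _ ≤ |a - a'| * 1 + M * ((if |z - y| ≤ r then 1 else 0) + (if r < |z - z'| then 1 else 0)) := by
        rw [abs_of_nonneg ha']
        gcongr
        exact ha'.trans ha'M
    _ = _ := by rw [mul_one]

lemma ite_lt_le_mul_rpow {M r t p : ℝ} (hM : 0 ≤ M) (hr : 0 < r) (ht : 0 ≤ t) (hp : 0 ≤ p) :
    (if r < t then M else 0) ≤ M * r ^ (-p) * t ^ p := by
  split_ifs with hrt
  · have h1 : 1 ≤ r ^ (-p) * t ^ p := by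
      rw [Real.rpow_neg hr.le, inv_mul_eq_div, one_le_div (by positivity)]
      exact Real.rpow_le_rpow hr.le hrt.le hp
    nlinarith
  · positivity

lemma integral_le_add_indicator_add {Ω : Type*} [MeasurableSpace Ω] {μ : Measure Ω}
    [IsFiniteMeasure μ] {f g₁ g₂ : Ω → ℝ} {S : Set Ω} {M : ℝ} (hM : 0 ≤ M)
    (hf : 0 ≤ f) (hg₁ : Integrable g₁ μ) (hg₂ : Integrable g₂ μ)
    (hle : ∀ ω, f ω ≤ g₁ ω + S.indicator (fun _ => M) ω + g₂ ω) :
    ∫ ω, f ω ∂μ ≤ ∫ ω, g₁ ω ∂μ + M * μ.real S + ∫ ω, g₂ ω ∂μ := by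
  -- `S` need not be measurable: pass to a measurable hull of the same measure.
  set T := toMeasurable μ S
  have hT : MeasurableSet T := measurableSet_toMeasurable μ S
  have hST : S.indicator (fun _ => M) ≤ T.indicator (fun _ => M) :=
    Set.indicator_le_indicator_of_subset (subset_toMeasurable μ S) fun _ => hM
  have hind : Integrable (T.indicator fun _ => M) μ := (integrable_const M).indicator hT
  calc ∫ ω, f ω ∂μ ≤ ∫ ω, (g₁ ω + T.indicator (fun _ => M) ω + g₂ ω) ∂μ :=
        integral_mono_of_nonneg (Filter.Eventually.of_forall hf) ((hg₁.add hind).add hg₂)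
          (Filter.Eventually.of_forall fun ω => by linarith [hle ω, hST ω])
    _ = ∫ ω, g₁ ω ∂μ + M * μ.real S + ∫ ω, g₂ ω ∂μ := by
        rw [integral_add (f := fun ω => g₁ ω + T.indicator (fun _ => M) ω) (hg₁.add hind) hg₂,
          integral_add hg₁ hind, integral_indicator_const M hT,
          measureReal_def, measure_toMeasurable, ← measureReal_def, smul_eq_mul, mul_comm]

theorem barrier_indicator_bound_general
    {Ω : Type*} [MeasurableSpace Ω] (μ : Measure Ω) [IsProbabilityMeasure μ]
    {n : ℕ} (ξ ξ' : Ω → (Fin n → ℝ)) (ζ ζ' : Ω → ℝ)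
    (y : ℝ) (K M : ℝ)
    (h : (Fin n → ℝ) → ℝ)
    (hLip : ∀ a b, |h a - h b| ≤ K * ∑ i, |a i - b i|)
    (hh0 : ∀ a, 0 ≤ h a) (hhM : ∀ a, h a ≤ M)
    (p r : ℝ) (hp : 0 < p) (hr : 0 < r)
    (hInt1 : Integrable (fun ω => ∑ i, |ξ ω i - ξ' ω i|) μ)
    (hInt2 : Integrable (fun ω => |ζ ω - ζ' ω| ^ p) μ) :
    ∫ ω, |(if y ≤ ζ ω then h (ξ ω) else 0) - (if y ≤ ζ' ω then h (ξ' ω) else 0)| ∂μ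
      ≤ K * ∫ ω, (∑ i, |ξ ω i - ξ' ω i|) ∂μ
        + M * (μ {ω | |ζ ω - y| ≤ r}).toReal
        + M * r ^ (-p) * ∫ ω, |ζ ω - ζ' ω| ^ p ∂μ := by
  have hM : 0 ≤ M := (hh0 0).trans (hhM 0)
  have hpointwise : ∀ ω,
      |(if y ≤ ζ ω then h (ξ ω) else 0) - (if y ≤ ζ' ω then h (ξ' ω) else 0)|
        ≤ K * (∑ i, |ξ ω i - ξ' ω i|) + {ω | |ζ ω - y| ≤ r}.indicator (fun _ => M) ω
          + M * r ^ (-p) * |ζ ω - ζ' ω| ^ p := fun ω => by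
    have hsplit := abs_ite_sub_ite_le (y := y) (z := ζ ω) (z' := ζ' ω) (r := r) (a := h (ξ ω))
      (hh0 (ξ' ω)) (hhM (ξ' ω))
    have hmarkov := ite_lt_le_mul_rpow hM hr (abs_nonneg (ζ ω - ζ' ω)) hp.le
    have hlip := hLip (ξ ω) (ξ' ω)
    simp only [Set.indicator_apply, Set.mem_ofPred_eq]
    linarith
  rw [← integral_const_mul, ← integral_const_mul, ← measureReal_def]
  exact integral_le_add_indicator_add hM (fun ω => abs_nonneg _) (hInt1.const_mul K)
    (hInt2.const_mul _) hpointwise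

/-- Lemma (Lp-to-barrier, first part): for random vectors `(ξ,ζ)`, `(ξ',ζ')` in
`ℝⁿ × ℝ`, `h : ℝⁿ → ℝ` `K`-Lipschitz w.r.t. the ℓ¹-norm with `0 ≤ h ≤ M`, and any
`p, r > 0`:
`E|h(ξ)1{ζ≥y} − h(ξ')1{ζ'≥y}| ≤ K·E‖ξ−ξ'‖₁ + M·P(|ζ−y|≤r) + M·r^{−p}·E|ζ−ζ'|^p`. -/
theorem barrier_indicator_bound
    {Ω : Type*} [MeasurableSpace Ω] (μ : Measure Ω) [IsProbabilityMeasure μ]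
    {n : ℕ} (ξ ξ' : Ω → (Fin n → ℝ)) (ζ ζ' : Ω → ℝ)
    (hξ : Measurable ξ) (hξ' : Measurable ξ') (hζ : Measurable ζ) (hζ' : Measurable ζ')
    (y : ℝ) (K M : ℝ) (hK : 0 ≤ K) (hM : 0 ≤ M)
    (h : (Fin n → ℝ) → ℝ)
    (hLip : ∀ a b, |h a - h b| ≤ K * ∑ i, |a i - b i|)
    (hh0 : ∀ a, 0 ≤ h a) (hhM : ∀ a, h a ≤ M)
    (p r : ℝ) (hp : 0 < p) (hr : 0 < r)
    (hInt1 : Integrable (fun ω => ∑ i, |ξ ω i - ξ' ω i|) μ)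
    (hInt2 : Integrable (fun ω => |ζ ω - ζ' ω| ^ p) μ) :
    ∫ ω, |(if y ≤ ζ ω then h (ξ ω) else 0) - (if y ≤ ζ' ω then h (ξ' ω) else 0)| ∂μ
      ≤ K * ∫ ω, (∑ i, |ξ ω i - ξ' ω i|) ∂μ
        + M * (μ {ω | |ζ ω - y| ≤ r}).toReal
        + M * r ^ (-p) * ∫ ω, |ζ ω - ζ' ω| ^ p ∂μ :=
  barrier_indicator_bound_general μ ξ ξ' ζ ζ' y K M h hLip hh0 hhM p r hp hr hInt1 hInt2
end

section
/- Let (ξ, ζ) and (ξ', ζ') be random vectors in ℝ^n × ℝ, y ∈ ℝ, and h : ℝ^n → ℝ be K-Lipschitz with 0 ≤ h ≤ M. Suppose there exist C, γ > 0 such that |P(ζ ≤ y) − P(ζ ≤ y + r)| ≤ C|r|^γ for all r ∈ ℝ. Then for any p > 0: E|h(ξ)·1{ζ ≥ y} − h(ξ')·1{ζ' ≥ y}| ≤ K·E‖ξ − ξ'‖ + M·(2Cγ/p)^{p/(p+γ)}·(1 + p/γ)·E[|ζ − ζ'|^p]^{γ/(p+γ)}. -/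
open MeasureTheory Set Filter Topology
open scoped symmDiff

/-!
Off the event where the indicators `1{ζ ≥ y}` and `1{ζ' ≥ y}` disagree, the integrand is at most
`|h ξ - h ξ'| ≤ K ‖ξ - ξ'‖₁`; on that event it is at most `M`. For every `r > 0` the event lies in
`{y - r < ζ ≤ y + r} ∪ {r ≤ |ζ - ζ'|}`, whose probability is at most `2 C r ^ γ` by the Hölder
condition plus `E |ζ - ζ'| ^ p / r ^ p` by Markov's inequality. Minimising over `r` gives the bound.
-/

lemma abs_indicator_sub_indicator_le {Ω : Type*} {A B : Set Ω} {u v : Ω → ℝ} {M : ℝ}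
    (hu0 : ∀ ω, 0 ≤ u ω) (huM : ∀ ω, u ω ≤ M) (hv0 : ∀ ω, 0 ≤ v ω) (hvM : ∀ ω, v ω ≤ M)
    (ω : Ω) :
    |A.indicator u ω - B.indicator v ω| ≤ |u ω - v ω| + (A ∆ B).indicator (fun _ => M) ω := by
  by_cases hA : ω ∈ A <;> by_cases hB : ω ∈ B <;>
    simp [hA, hB, Set.mem_symmDiff, abs_of_nonneg (hu0 ω), abs_of_nonneg (hv0 ω)]
  · linarith [huM ω, abs_nonneg (u ω - v ω)]
  · linarith [hvM ω, abs_nonneg (u ω - v ω)]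

section Integrals

variable {Ω : Type*} [MeasurableSpace Ω] {μ : Measure Ω} [IsFiniteMeasure μ]

lemma integral_abs_indicator_sub_indicator_le {A B : Set Ω}
    (hA : MeasurableSet A) (hB : MeasurableSet B) {u v d : Ω → ℝ} {M : ℝ}
    (hu0 : ∀ ω, 0 ≤ u ω) (huM : ∀ ω, u ω ≤ M) (hv0 : ∀ ω, 0 ≤ v ω) (hvM : ∀ ω, v ω ≤ M)
    (hd : Integrable d μ) (hud : ∀ ω, |u ω - v ω| ≤ d ω) :
    ∫ ω, |A.indicator u ω - B.indicator v ω| ∂μ ≤ ∫ ω, d ω ∂μ + M * μ.real (A ∆ B) := by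
  have hind : Integrable ((A ∆ B).indicator fun _ => M) μ :=
    (integrable_const M).indicator (hA.symmDiff hB)
  calc ∫ ω, |A.indicator u ω - B.indicator v ω| ∂μ
      ≤ ∫ ω, (d ω + (A ∆ B).indicator (fun _ => M) ω) ∂μ :=
        integral_mono_of_nonneg (.of_forall fun _ => abs_nonneg _) (hd.add hind)
          (.of_forall fun ω => (abs_indicator_sub_indicator_le hu0 huM hv0 hvM ω).trans
            (by linarith [hud ω]))
    _ = ∫ ω, d ω ∂μ + M * μ.real (A ∆ B) := by
        rw [integral_add hd hind, integral_indicator_const M (hA.symmDiff hB), smul_eq_mul,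
          mul_comm]

lemma measureReal_le_abs_le_integral_rpow_div {f : Ω → ℝ} {p r : ℝ}
    (hp : 0 < p) (hr : 0 < r) (hf : Integrable (fun ω => |f ω| ^ p) μ) :
    μ.real {ω | r ≤ |f ω|} ≤ (∫ ω, |f ω| ^ p ∂μ) / r ^ p := by
  rw [le_div_iff₀ (by positivity), mul_comm]
  calc r ^ p * μ.real {ω | r ≤ |f ω|} ≤ r ^ p * μ.real {ω | r ^ p ≤ |f ω| ^ p} :=
        mul_le_mul_of_nonneg_left (measureReal_mono fun ω (hω : r ≤ |f ω|) =>
          Real.rpow_le_rpow hr.le hω hp.le) (by positivity)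
    _ ≤ ∫ ω, |f ω| ^ p ∂μ :=
        mul_meas_ge_le_integral_of_nonneg (.of_forall fun ω => by positivity) hf _

end Integrals

section DistributionFunction

variable {Ω : Type*} [MeasurableSpace Ω] {μ : Measure Ω} [IsFiniteMeasure μ] {ζ : Ω → ℝ}

lemma measureReal_preimage_Ioc (hζ : Measurable ζ) {a b : ℝ} (hab : a ≤ b) :
    μ.real (ζ ⁻¹' Ioc a b) = μ.real {ω | ζ ω ≤ b} - μ.real {ω | ζ ω ≤ a} := by
  have hsub : {ω | ζ ω ≤ a} ⊆ {ω | ζ ω ≤ b} := fun ω hω => le_trans hω hab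
  rw [← measureReal_sdiff hsub (measurableSet_le hζ measurable_const)]
  congr 1
  ext ω
  simp [and_comm]

lemma measureReal_preimage_Ioc_le_of_holder (hζ : Measurable ζ) {y C γ r : ℝ}
    (hHolder : ∀ s : ℝ, |μ.real {ω | ζ ω ≤ y} - μ.real {ω | ζ ω ≤ y + s}| ≤ C * |s| ^ γ)
    (hr : 0 < r) :
    μ.real (ζ ⁻¹' Ioc (y - r) (y + r)) ≤ 2 * C * r ^ γ := by
  have hright := abs_le.mp (hHolder r)
  have hleft := abs_le.mp (hHolder (-r))
  rw [abs_of_pos hr] at hright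
  rw [abs_neg, abs_of_pos hr, ← sub_eq_add_neg] at hleft
  rw [measureReal_preimage_Ioc hζ (by linarith)]
  linarith [hright.1, hleft.2]

end DistributionFunction

lemma measureReal_symmDiff_le_preimage_Ioc_add {Ω : Type*} [MeasurableSpace Ω] {μ : Measure Ω}
    [IsFiniteMeasure μ] (ζ ζ' : Ω → ℝ) (y : ℝ) {r : ℝ} :
    μ.real ({ω | y ≤ ζ ω} ∆ {ω | y ≤ ζ' ω})
      ≤ μ.real (ζ ⁻¹' Ioc (y - r) (y + r)) + μ.real {ω | r ≤ |ζ ω - ζ' ω|} := by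
  refine (measureReal_mono fun ω hω => ?_).trans (measureReal_union_le _ _)
  by_contra hout
  simp only [mem_union, mem_preimage, mem_Ioc, mem_ofPred_eq, not_or, not_and_or, not_lt,
    not_le] at hout
  obtain ⟨hnear, hclose⟩ := hout
  rcases abs_lt.mp hclose with ⟨h1, h2⟩
  rcases hω with ⟨h3, h4⟩ | ⟨h3, h4⟩ <;> simp only [mem_ofPred_eq, not_le] at h3 h4 <;>
    rcases hnear with h | h <;> linarith

section Optimization

variable {A E γ p : ℝ}

lemma exists_mul_rpow_add_div_rpow_eq (hA : 0 < A) (hE : 0 < E) (hγ : 0 < γ) (hp : 0 < p) :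
    ∃ r > 0, A * r ^ γ + E / r ^ p
      = (A * γ / p) ^ (p / (p + γ)) * (1 + p / γ) * E ^ (γ / (p + γ)) := by
  obtain ⟨B, hB, hAB⟩ : ∃ B > 0, A = B * p / γ := ⟨A * γ / p, by positivity, by field_simp⟩
  subst hAB
  have hBγp : B * p / γ * γ / p = B := by field_simp
  rw [hBγp]
  have hsplit : ∀ x : ℝ, 0 < x → x = x ^ (p / (p + γ)) * x ^ (γ / (p + γ)) := fun x hx => by
    rw [← Real.rpow_add hx, ← add_div, div_self (by positivity), Real.rpow_one]
  -- the minimiser: `r ^ (p + γ) = p E / (A γ)`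
  refine ⟨(E / B) ^ (1 / (p + γ)), by positivity, ?_⟩
  rw [← Real.rpow_mul (by positivity), ← Real.rpow_mul (by positivity), one_div_mul_eq_div,
    one_div_mul_eq_div, Real.div_rpow hE.le hB.le, Real.div_rpow hE.le hB.le]
  have hBs := hsplit B hB
  have hEs := hsplit E hE
  have hu : 0 < B ^ (p / (p + γ)) := by positivity
  have hv : 0 < B ^ (γ / (p + γ)) := by positivity
  have he : 0 < E ^ (p / (p + γ)) := by positivity
  generalize B ^ (p / (p + γ)) = u at hBs hu ⊢
  generalize B ^ (γ / (p + γ)) = v at hBs hv ⊢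
  generalize E ^ (p / (p + γ)) = e at hEs he ⊢
  generalize E ^ (γ / (p + γ)) = e' at hEs ⊢
  subst hBs hEs
  field_simp
  ring

lemma le_of_forall_le_mul_rpow_add_div_rpow {X : ℝ} (hA : 0 < A) (hE : 0 ≤ E) (hγ : 0 < γ)
    (hp : 0 < p) (hX : ∀ r > 0, X ≤ A * r ^ γ + E / r ^ p) :
    X ≤ (A * γ / p) ^ (p / (p + γ)) * (1 + p / γ) * E ^ (γ / (p + γ)) := by
  rcases hE.lt_or_eq with hE | rfl
  · obtain ⟨r, hr, hopt⟩ := exists_mul_rpow_add_div_rpow_eq hA hE hγ hp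
    exact hopt ▸ hX r hr
  · rw [Real.zero_rpow (by positivity), mul_zero]
    have hlim : Tendsto (fun r : ℝ => A * r ^ γ) (𝓝[>] 0) (𝓝 0) := by
      have := ((Real.continuous_rpow_const hγ.le).const_mul A).tendsto 0
      rw [Real.zero_rpow hγ.ne', mul_zero] at this
      exact this.mono_left nhdsWithin_le_nhds
    refine ge_of_tendsto hlim (eventually_nhdsWithin_of_forall fun r hr => ?_)
    simpa using hX r hr

end Optimization

theorem barrier_indicator_holder_bound_general
    {Ω : Type*} [MeasurableSpace Ω] (μ : Measure Ω) [IsProbabilityMeasure μ]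
    {n : ℕ} (ξ ξ' : Ω → (Fin n → ℝ)) (ζ ζ' : Ω → ℝ)
    (hζ : Measurable ζ) (hζ' : Measurable ζ')
    (y : ℝ) (K M : ℝ)
    (h : (Fin n → ℝ) → ℝ)
    (hLip : ∀ a b, |h a - h b| ≤ K * ∑ i, |a i - b i|)
    (hh0 : ∀ a, 0 ≤ h a) (hhM : ∀ a, h a ≤ M)
    (C γ : ℝ) (hC : 0 < C) (hγ : 0 < γ)
    (hHolder : ∀ s : ℝ, |(μ {ω | ζ ω ≤ y}).toReal - (μ {ω | ζ ω ≤ y + s}).toReal|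
      ≤ C * |s| ^ γ)
    (p : ℝ) (hp : 0 < p)
    (hInt1 : Integrable (fun ω => ∑ i, |ξ ω i - ξ' ω i|) μ)
    (hInt2 : Integrable (fun ω => |ζ ω - ζ' ω| ^ p) μ) :
    ∫ ω, |(if y ≤ ζ ω then h (ξ ω) else 0) - (if y ≤ ζ' ω then h (ξ' ω) else 0)| ∂μ
      ≤ K * ∫ ω, (∑ i, |ξ ω i - ξ' ω i|) ∂μ
        + M * (2 * C * γ / p) ^ (p / (p + γ)) * (1 + p / γ)
          * (∫ ω, |ζ ω - ζ' ω| ^ p ∂μ) ^ (γ / (p + γ)) := by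
  have hM : 0 ≤ M := (hh0 0).trans (hhM 0)
  have hdisagree : ∀ r > 0, μ.real ({ω | y ≤ ζ ω} ∆ {ω | y ≤ ζ' ω})
      ≤ 2 * C * r ^ γ + (∫ ω, |ζ ω - ζ' ω| ^ p ∂μ) / r ^ p := fun r hr =>
    (measureReal_symmDiff_le_preimage_Ioc_add ζ ζ' y).trans (add_le_add
      (measureReal_preimage_Ioc_le_of_holder hζ hHolder hr)
      (measureReal_le_abs_le_integral_rpow_div hp hr hInt2))
  have hsplit := integral_abs_indicator_sub_indicator_le (μ := μ)
    (measurableSet_le (measurable_const (a := y)) hζ)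
    (measurableSet_le (measurable_const (a := y)) hζ')
    (fun ω => hh0 (ξ ω)) (fun ω => hhM (ξ ω)) (fun ω => hh0 (ξ' ω)) (fun ω => hhM (ξ' ω))
    (hInt1.const_mul K) (fun ω => hLip (ξ ω) (ξ' ω))
  simp only [indicator_apply, mem_ofPred_eq, integral_const_mul] at hsplit
  refine hsplit.trans ?_
  rw [mul_assoc M, mul_assoc M]
  gcongr
  exact le_of_forall_le_mul_rpow_add_div_rpow (by positivity)
    (integral_nonneg fun ω => by positivity) hγ hp hdisagree

/-- Lemma (Lp-to-barrier, second part): under a local Hölder condition on the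
distribution function of `ζ` at `y`, for any `p > 0`:
`E|h(ξ)1{ζ≥y} − h(ξ')1{ζ'≥y}|
  ≤ K·E‖ξ−ξ'‖₁ + M·(2Cγ/p)^{p/(p+γ)}·(1+p/γ)·(E|ζ−ζ'|^p)^{γ/(p+γ)}`. -/
theorem barrier_indicator_holder_bound
    {Ω : Type*} [MeasurableSpace Ω] (μ : Measure Ω) [IsProbabilityMeasure μ]
    {n : ℕ} (ξ ξ' : Ω → (Fin n → ℝ)) (ζ ζ' : Ω → ℝ)
    (hξ : Measurable ξ) (hξ' : Measurable ξ') (hζ : Measurable ζ) (hζ' : Measurable ζ')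
    (y : ℝ) (K M : ℝ) (hK : 0 ≤ K) (hM : 0 ≤ M)
    (h : (Fin n → ℝ) → ℝ)
    (hLip : ∀ a b, |h a - h b| ≤ K * ∑ i, |a i - b i|)
    (hh0 : ∀ a, 0 ≤ h a) (hhM : ∀ a, h a ≤ M)
    (C γ : ℝ) (hC : 0 < C) (hγ : 0 < γ)
    (hHolder : ∀ s : ℝ, |(μ {ω | ζ ω ≤ y}).toReal - (μ {ω | ζ ω ≤ y + s}).toReal|
      ≤ C * |s| ^ γ)
    (p : ℝ) (hp : 0 < p)
    (hInt1 : Integrable (fun ω => ∑ i, |ξ ω i - ξ' ω i|) μ)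
    (hInt2 : Integrable (fun ω => |ζ ω - ζ' ω| ^ p) μ) :
    ∫ ω, |(if y ≤ ζ ω then h (ξ ω) else 0) - (if y ≤ ζ' ω then h (ξ' ω) else 0)| ∂μ
      ≤ K * ∫ ω, (∑ i, |ξ ω i - ξ' ω i|) ∂μ
        + M * (2 * C * γ / p) ^ (p / (p + γ)) * (1 + p / γ)
          * (∫ ω, |ζ ω - ζ' ω| ^ p ∂μ) ^ (γ / (p + γ)) :=
  barrier_indicator_holder_bound_general μ ξ ξ' ζ ζ' hζ hζ' y K M h hLip hh0 hhM C γ hC hγ hHolder p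
    hp hInt1 hInt2
end

section
/- Let ℓ = (ℓ_n) be a stick-breaking process on [0,t] and let (ξ_n, ξ_n^{(κ)}), n ∈ ℕ, be random vectors that, conditional on ℓ, are independent with E[|1{ξ_n ≤ x} − 1{ξ_n^{(κ)} ≤ x}| | ℓ_n] ≤ (c/√ℓ_n)·1 ∧ 1 for a constant c > 0 (i.e. the conditional Kolmogorov distance at each stick is at most c/√ℓ_n). Then E[∑_{n=1}^∞ ℓ_n |1{ξ_n ≤ x} − 1{ξ_n^{(κ)} ≤ x}|] ≤ 2c√t. -/
/-!
Conditioning on `ℓₙ` bounds the `n`-th term by `E[ℓₙ · c/√ℓₙ] = c E[√ℓₙ]`. In closed form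
`ℓₙ = t (1 - U₁) ⋯ (1 - Uₙ₋₁) Uₙ` is a product of independent factors, and
`E[√U] = E[√(1 - U)] = 2/3` for `U` uniform on `(0,1)`, so `E[√ℓₙ] = √t (2/3)ⁿ` and the
terms sum to `c √t (2/3) / (1 - 2/3) = 2c√t`.
-/

open MeasureTheory ProbabilityTheory

open Finset in
theorem ProbabilityTheory.iIndepFun.integral_finset_prod_comp {Ω β ι : Type*}
    [MeasurableSpace Ω] [MeasurableSpace β] {μ : Measure Ω} {X : ι → Ω → β} (hX : iIndepFun X μ)
    (hX_meas : ∀ i, Measurable (X i))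
    {f : ι → β → ℝ} (hf : ∀ i, Measurable (f i)) (s : Finset ι) :
    ∫ ω, ∏ i ∈ s, f i (X i ω) ∂μ = ∏ i ∈ s, ∫ ω, f i (X i ω) ∂μ := by
  have h := iIndepFun.integral_fun_prod_comp (X := fun i : s => X i) (f := fun i : s => f i)
    (hX.precomp Subtype.val_injective) (fun i => (hX_meas i).aemeasurable)
    (fun i => (hf i).aestronglyMeasurable)
  simp_rw [← s.prod_coe_sort]
  exact h

theorem ae_mem_of_map_eq_restrict {Ω β : Type*} [MeasurableSpace Ω] [MeasurableSpace β]
    {μ : Measure Ω} {ν : Measure β} {X : Ω → β} {s : Set β} (hX : Measurable X)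
    (hs : MeasurableSet s) (hlaw : μ.map X = ν.restrict s) : ∀ᵐ ω ∂μ, X ω ∈ s :=
  (ae_map_iff hX.aemeasurable hs).mp (hlaw ▸ ae_restrict_mem hs)

theorem integral_comp_of_map_eq_restrict {Ω : Type*} [MeasurableSpace Ω] {μ : Measure Ω}
    {X : Ω → ℝ} {s : Set ℝ} (hX : Measurable X) (hlaw : μ.map X = volume.restrict s)
    {g : ℝ → ℝ} (hg : Measurable g) : ∫ ω, g (X ω) ∂μ = ∫ y in s, g y := by
  rw [← integral_map hX.aemeasurable hg.aestronglyMeasurable, hlaw]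

theorem integral_sqrt_Ioo_zero_one : ∫ y in Set.Ioo (0 : ℝ) 1, √y = 2 / 3 := by
  rw [← integral_Ioc_eq_integral_Ioo, ← intervalIntegral.integral_of_le zero_le_one]
  simp_rw [Real.sqrt_eq_rpow]
  rw [integral_rpow (Or.inl (by norm_num))]
  norm_num

theorem integral_sqrt_one_sub_Ioo_zero_one : ∫ y in Set.Ioo (0 : ℝ) 1, √(1 - y) = 2 / 3 := by
  rw [← integral_Ioc_eq_integral_Ioo, ← intervalIntegral.integral_of_le zero_le_one,
    intervalIntegral.integral_comp_sub_left (fun y => √y) 1, sub_self, sub_zero,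
    intervalIntegral.integral_of_le zero_le_one, integral_Ioc_eq_integral_Ioo,
    integral_sqrt_Ioo_zero_one]

theorem hasSum_two_thirds_pow_succ : HasSum (fun n : ℕ => (2 / 3 : ℝ) ^ (n + 1)) 2 := by
  have h := (hasSum_geometric_of_lt_one (r := (2 / 3 : ℝ)) (by norm_num) (by norm_num)).mul_left
    (2 / 3)
  rw [show (2 / 3 : ℝ) * (1 - 2 / 3)⁻¹ = 2 by norm_num] at h
  simpa only [pow_succ'] using h

theorem abs_ite_sub_ite_le_one (p q : Prop) [Decidable p] [Decidable q] :
    |(if p then (1 : ℝ) else 0) - if q then 1 else 0| ≤ 1 := by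
  split_ifs <;> norm_num

theorem integrable_abs_ite_le_sub_ite_le {Ω : Type*} [MeasurableSpace Ω] {μ : Measure Ω}
    [IsFiniteMeasure μ] {ξ ξ' : Ω → ℝ} (hξ : Measurable ξ) (hξ' : Measurable ξ') (x : ℝ) :
    Integrable (fun ω => |(if ξ ω ≤ x then (1 : ℝ) else 0) - if ξ' ω ≤ x then 1 else 0|) μ := by
  refine .of_bound (Measurable.aestronglyMeasurable ?_) 1 (ae_of_all _ fun ω => ?_)
  · exact ((measurable_const.ite (measurableSet_le hξ measurable_const) measurable_const).sub
      (measurable_const.ite (measurableSet_le hξ' measurable_const) measurable_const)).abs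
  · rw [Real.norm_of_nonneg (abs_nonneg _)]
    exact abs_ite_sub_ite_le_one _ _

theorem integral_mul_le_of_condExp_le_div_sqrt {Ω : Type*} [MeasurableSpace Ω] {μ : Measure Ω}
    [IsFiniteMeasure μ] {X D : Ω → ℝ} {a c : ℝ} (hX : Measurable X)
    (hX_mem : ∀ᵐ ω ∂μ, X ω ∈ Set.Icc 0 a) (hD : Integrable D μ)
    (hcond : μ[D | MeasurableSpace.comap X inferInstance] ≤ᵐ[μ] fun ω => c / √(X ω)) :
    ∫ ω, X ω * D ω ∂μ ≤ c * ∫ ω, √(X ω) ∂μ := by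
  set m := MeasurableSpace.comap X inferInstance
  have hXD : Integrable (X * D) μ := hD.bdd_mul hX.aestronglyMeasurable (c := a) <| by
    filter_upwards [hX_mem] with ω hω
    rw [Real.norm_of_nonneg hω.1]; exact hω.2
  have hsqrtX : Integrable (fun ω => √(X ω)) μ := by
    refine .of_bound hX.sqrt.aestronglyMeasurable √a ?_
    filter_upwards [hX_mem] with ω hω
    rw [Real.norm_of_nonneg (Real.sqrt_nonneg _)]; exact Real.sqrt_le_sqrt hω.2
  have hpull : μ[X * D | m] =ᵐ[μ] X * μ[D | m] :=
    condExp_mul_of_stronglyMeasurable_left (comap_measurable X).stronglyMeasurable hXD hD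
  calc ∫ ω, X ω * D ω ∂μ = ∫ ω, μ[X * D | m] ω ∂μ := (integral_condExp hX.comap_le).symm
    _ ≤ ∫ ω, c * √(X ω) ∂μ := by
      refine integral_mono_ae integrable_condExp (hsqrtX.const_mul c) ?_
      filter_upwards [hpull, hcond, hX_mem] with ω hpull hcond hω
      calc μ[X * D | m] ω = X ω * μ[D | m] ω := hpull
        _ ≤ X ω * (c / √(X ω)) := mul_le_mul_of_nonneg_left hcond hω.1
        _ = c * √(X ω) := by rw [mul_div_left_comm, Real.div_sqrt]
    _ = c * ∫ ω, √(X ω) ∂μ := integral_const_mul c _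

theorem integral_tsum_le_of_integral_le {Ω : Type*} [MeasurableSpace Ω] {μ : Measure Ω}
    {F : ℕ → Ω → ℝ} {b : ℕ → ℝ} (hF_nonneg : ∀ n, 0 ≤ᵐ[μ] F n)
    (hF_int : ∀ n, Integrable (F n) μ) (hb : Summable b) (hFb : ∀ n, ∫ ω, F n ω ∂μ ≤ b n) :
    ∫ ω, ∑' n, F n ω ∂μ ≤ ∑' n, b n := by
  have hnorm : ∀ n, ∫ ω, ‖F n ω‖ ∂μ = ∫ ω, F n ω ∂μ := fun n =>
    integral_congr_ae <| (hF_nonneg n).mono fun ω hω => Real.norm_of_nonneg hω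
  have hsum : Summable fun n => ∫ ω, F n ω ∂μ :=
    .of_nonneg_of_le (fun n => integral_nonneg_of_ae (hF_nonneg n)) hFb hb
  rw [← integral_tsum_of_summable_integral_norm hF_int (by simpa only [hnorm] using hsum)]
  exact hsum.tsum_le_tsum hFb hb

section StickBreaking

open Finset

variable {Ω : Type*} {t : ℝ} {U : ℕ → Ω → ℝ}

def stickPiece (t : ℝ) (U : ℕ → Ω → ℝ) (n : ℕ) (ω : Ω) : ℝ :=
  t * (∏ k ∈ range n, (1 - U k ω)) * U n ω

theorem eq_stickPiece {L l : ℕ → Ω → ℝ} (hL0 : ∀ ω, L 0 ω = t)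
    (hl : ∀ n ω, l n ω = L n ω * U n ω) (hL : ∀ n ω, L (n + 1) ω = L n ω - l n ω) :
    l = stickPiece t U := by
  have hL_eq : ∀ n ω, L n ω = t * ∏ k ∈ range n, (1 - U k ω) := by
    intro n ω
    induction n with
    | zero => simp [hL0]
    | succ n ih => rw [hL, hl, ih, prod_range_succ]; ring
  ext n ω
  rw [hl, hL_eq, stickPiece]

theorem measurable_stickPiece [MeasurableSpace Ω] (hU : ∀ k, Measurable (U k)) (n : ℕ) :
    Measurable (stickPiece t U n) := by
  unfold stickPiece; fun_prop

theorem stickPiece_mem_Icc (ht : 0 ≤ t) {ω : Ω} (hU : ∀ k, U k ω ∈ Set.Icc 0 1) (n : ℕ) :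
    stickPiece t U n ω ∈ Set.Icc 0 t := by
  have h1 : ∀ k, 0 ≤ 1 - U k ω := fun k => sub_nonneg.2 (hU k).2
  have h2 : ∀ k, 1 - U k ω ≤ 1 := fun k => sub_le_self _ (hU k).1
  have hprod : ∏ k ∈ range n, (1 - U k ω) ∈ Set.Icc 0 1 :=
    ⟨prod_nonneg fun k _ => h1 k, prod_le_one (fun k _ => h1 k) fun k _ => h2 k⟩
  refine ⟨by unfold stickPiece; have := (hU n).1; have := hprod.1; positivity, ?_⟩
  calc stickPiece t U n ω ≤ t * 1 * 1 :=
        mul_le_mul (mul_le_mul_of_nonneg_left hprod.2 ht) (hU n).2 (hU n).1 (by positivity)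
    _ = t := by ring

-- One factor per independent `U k`, the shape needed to take expectations factorwise.
theorem sqrt_stickPiece (ht : 0 ≤ t) {ω : Ω} (hU : ∀ k, U k ω ∈ Set.Icc 0 1) (n : ℕ) :
    √(stickPiece t U n ω)
      = √t * ∏ k ∈ range (n + 1), (if k = n then √(U k ω) else √(1 - U k ω)) := by
  have h1 : ∀ k, 0 ≤ 1 - U k ω := fun k => sub_nonneg.2 (hU k).2
  rw [stickPiece, Real.sqrt_mul (mul_nonneg ht (prod_nonneg fun k _ => h1 k)), Real.sqrt_mul ht,
    Real.sqrt_prod _ fun k _ => h1 k, prod_range_succ, if_pos rfl, mul_assoc,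
    prod_congr rfl fun k hk => if_neg (mem_range.1 hk).ne]

theorem ae_forall_mem_Icc_of_map_eq_restrict_Ioo [MeasurableSpace Ω] {μ : Measure Ω}
    (hU : ∀ k, Measurable (U k))
    (hU_law : ∀ k, μ.map (U k) = volume.restrict (Set.Ioo 0 1)) :
    ∀ᵐ ω ∂μ, ∀ k, U k ω ∈ Set.Icc 0 1 :=
  ae_all_iff.2 fun k => (ae_mem_of_map_eq_restrict (hU k) measurableSet_Ioo (hU_law k)).mono
    fun _ h => Set.Ioo_subset_Icc_self h

theorem integral_sqrt_stickPiece [MeasurableSpace Ω] {μ : Measure Ω} [IsProbabilityMeasure μ]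
    (ht : 0 ≤ t) (hU : ∀ k, Measurable (U k)) (hU_indep : iIndepFun U μ)
    (hU_law : ∀ k, μ.map (U k) = volume.restrict (Set.Ioo 0 1)) (n : ℕ) :
    ∫ ω, √(stickPiece t U n ω) ∂μ = √t * (2 / 3) ^ (n + 1) := by
  set f : ℕ → ℝ → ℝ := fun k y => if k = n then √y else √(1 - y)
  have hf : ∀ k, Measurable (f k) := fun k => by unfold f; split_ifs <;> fun_prop
  have hf_int : ∀ k, ∫ ω, f k (U k ω) ∂μ = 2 / 3 := fun k => by
    rw [integral_comp_of_map_eq_restrict (hU k) (hU_law k) (hf k)]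
    unfold f
    split_ifs
    exacts [integral_sqrt_Ioo_zero_one, integral_sqrt_one_sub_Ioo_zero_one]
  rw [integral_congr_ae ((ae_forall_mem_Icc_of_map_eq_restrict_Ioo hU hU_law).mono
    fun _ hω => sqrt_stickPiece ht hω n), integral_const_mul]
  change √t * ∫ ω, ∏ k ∈ range (n + 1), f k (U k ω) ∂μ = _
  rw [hU_indep.integral_finset_prod_comp hU hf, prod_congr rfl fun k _ => hf_int k, prod_const,
    card_range]

end StickBreaking

theorem stick_breaking_indicator_sum_bound_general
    {Ω : Type*} [MeasurableSpace Ω] (μ : Measure Ω) [IsProbabilityMeasure μ]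
    (t : ℝ) (ht : 0 < t)
    (U L l : ℕ → Ω → ℝ)
    (hUmeas : ∀ n, Measurable (U n))
    (hUindep : iIndepFun U μ)
    (hUlaw : ∀ n, Measure.map (U n) μ = volume.restrict (Set.Ioo (0:ℝ) 1))
    (hL0 : ∀ ω, L 0 ω = t)
    (hl : ∀ n ω, l n ω = L n ω * U n ω)
    (hL : ∀ n ω, L (n + 1) ω = L n ω - l n ω)
    (ξ ξκ : ℕ → Ω → ℝ) (hξmeas : ∀ n, Measurable (ξ n)) (hξκmeas : ∀ n, Measurable (ξκ n))
    (x : ℝ) (c : ℝ)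
    (hcond : ∀ n,
      μ[(fun ω => |(if ξ n ω ≤ x then (1:ℝ) else 0) - (if ξκ n ω ≤ x then (1:ℝ) else 0)|)
          | MeasurableSpace.comap (l n) inferInstance]
        ≤ᵐ[μ] fun ω => min (c / Real.sqrt (l n ω)) 1) :
    ∫ ω, (∑' n : ℕ, l n ω
        * |(if ξ n ω ≤ x then (1:ℝ) else 0) - (if ξκ n ω ≤ x then (1:ℝ) else 0)|) ∂μ
      ≤ 2 * c * Real.sqrt t := by
  obtain rfl := eq_stickPiece hL0 hl hL
  set D : ℕ → Ω → ℝ := fun n ω =>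
    |(if ξ n ω ≤ x then (1:ℝ) else 0) - (if ξκ n ω ≤ x then (1:ℝ) else 0)|
  have hD_int : ∀ n, Integrable (D n) μ := fun n =>
    integrable_abs_ite_le_sub_ite_le (hξmeas n) (hξκmeas n) x
  have hpiece_mem : ∀ᵐ ω ∂μ, ∀ n, stickPiece t U n ω ∈ Set.Icc 0 t :=
    (ae_forall_mem_Icc_of_map_eq_restrict_Ioo hUmeas hUlaw).mono
      fun _ hω => stickPiece_mem_Icc ht.le hω
  have hterm : ∀ n, ∫ ω, stickPiece t U n ω * D n ω ∂μ ≤ c * √t * (2 / 3) ^ (n + 1) :=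
    fun n => by
      rw [mul_assoc, ← integral_sqrt_stickPiece ht.le hUmeas hUindep hUlaw n]
      exact integral_mul_le_of_condExp_le_div_sqrt (measurable_stickPiece hUmeas n)
        (hpiece_mem.mono fun ω h => h n) (hD_int n)
        ((hcond n).trans (ae_of_all _ fun ω => min_le_left _ _))
  have hgeom := hasSum_two_thirds_pow_succ.mul_left (c * √t)
  calc _ ≤ ∑' n : ℕ, c * √t * (2 / 3 : ℝ) ^ (n + 1) :=
        integral_tsum_le_of_integral_le
          (fun n => hpiece_mem.mono fun ω h => mul_nonneg (h n).1 (abs_nonneg _))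
          (fun n => (hD_int n).bdd_mul (measurable_stickPiece hUmeas n).aestronglyMeasurable
            (hpiece_mem.mono fun ω h => (Real.norm_of_nonneg (h n).1).trans_le (h n).2))
          hgeom.summable hterm
    _ = c * √t * 2 := hgeom.tsum_eq
    _ = 2 * c * √t := by ring

/-- If `(ℓₙ)` is a stick-breaking process on `[0,t]` (here `l n = ℓ_{n+1}`) and the
pairs `(ξₙ, ξₙ^{(κ)})` satisfy the conditional Kolmogorov-distance bound
`E[|1{ξₙ≤x} − 1{ξₙ^{(κ)}≤x}| | ℓₙ] ≤ min{c/√ℓₙ, 1}` a.s., then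
`E[∑ₙ ℓₙ |1{ξₙ≤x} − 1{ξₙ^{(κ)}≤x}|] ≤ 2c√t`. -/
theorem stick_breaking_indicator_sum_bound
    {Ω : Type*} [MeasurableSpace Ω] (μ : Measure Ω) [IsProbabilityMeasure μ]
    (t : ℝ) (ht : 0 < t)
    (U L l : ℕ → Ω → ℝ)
    (hUmeas : ∀ n, Measurable (U n))
    (hUindep : iIndepFun U μ)
    (hUlaw : ∀ n, Measure.map (U n) μ = volume.restrict (Set.Ioo (0:ℝ) 1))
    (hL0 : ∀ ω, L 0 ω = t)
    (hl : ∀ n ω, l n ω = L n ω * U n ω)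
    (hL : ∀ n ω, L (n + 1) ω = L n ω - l n ω)
    (ξ ξκ : ℕ → Ω → ℝ) (hξmeas : ∀ n, Measurable (ξ n)) (hξκmeas : ∀ n, Measurable (ξκ n))
    (x : ℝ) (c : ℝ) (hc : 0 < c)
    (hcond : ∀ n,
      μ[(fun ω => |(if ξ n ω ≤ x then (1:ℝ) else 0) - (if ξκ n ω ≤ x then (1:ℝ) else 0)|)
          | MeasurableSpace.comap (l n) inferInstance]
        ≤ᵐ[μ] fun ω => min (c / Real.sqrt (l n ω)) 1) :
    ∫ ω, (∑' n : ℕ, l n ω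
        * |(if ξ n ω ≤ x then (1:ℝ) else 0) - (if ξκ n ω ≤ x then (1:ℝ) else 0)|) ∂μ
      ≤ 2 * c * Real.sqrt t :=
  stick_breaking_indicator_sum_bound_general μ t ht U L l hUmeas hUindep hUlaw hL0 hl hL ξ ξκ hξmeas
    hξκmeas x c hcond
end

section
/- Suppose a random variable ζ (the time of the infimum un τ_T of a Lévy process) has a density on (0,T) of the form s ↦ n̲(s)·n̄(T−s), where n̲, n̄ : (0,T] → (0,∞) are non-increasing functions such that n̲(s)n̄(T−s) ≤ C s^{γ−1}(T−s)^{γ−1} on (0,T) for some C > 0 and γ ∈ (0,1). Then there exists a constant C' > 0 such that for all 0 ≤ s ≤ t ≤ T: P(ζ ≤ t) − P(ζ ≤ s) ≤ C'·(t − s)^γ. -/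
/-!
On `(0, T)` one of `u`, `T - u` is at least `T / 2`, so the majorant of the density satisfies
`u ^ (γ - 1) * (T - u) ^ (γ - 1) ≤ (T / 2) ^ (γ - 1) * (u ^ (γ - 1) + (T - u) ^ (γ - 1))`.
Both summands integrate explicitly over `[s, t]`, and subadditivity of `x ↦ x ^ γ` bounds
each integral by `(t - s) ^ γ / γ`.
-/

open MeasureTheory Set intervalIntegral

lemma Real.rpow_sub_rpow_le_rpow_sub {p a b : ℝ} (hp0 : 0 ≤ p) (hp1 : p ≤ 1) (ha : 0 ≤ a)
    (hab : a ≤ b) : b ^ p - a ^ p ≤ (b - a) ^ p := by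
  have h := Real.rpow_add_le_add_rpow (sub_nonneg.2 hab) ha hp0 hp1
  rw [sub_add_cancel] at h
  linarith

lemma integral_rpow_sub_one_le {γ a b : ℝ} (hγ0 : 0 < γ) (hγ1 : γ ≤ 1) (ha : 0 ≤ a)
    (hab : a ≤ b) : ∫ u in a..b, u ^ (γ - 1) ≤ (b - a) ^ γ / γ := by
  rw [integral_rpow (Or.inl (by linarith)), sub_add_cancel]
  gcongr
  exact Real.rpow_sub_rpow_le_rpow_sub hγ0.le hγ1 ha hab

lemma integral_sub_rpow_sub_one_le {γ T a b : ℝ} (hγ0 : 0 < γ) (hγ1 : γ ≤ 1) (hab : a ≤ b)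
    (hbT : b ≤ T) : ∫ u in a..b, (T - u) ^ (γ - 1) ≤ (b - a) ^ γ / γ := by
  rw [integral_comp_sub_left (fun u ↦ u ^ (γ - 1))]
  simpa only [sub_sub_sub_cancel_left] using
    integral_rpow_sub_one_le hγ0 hγ1 (sub_nonneg.2 hbT) (sub_le_sub_left hab T)

lemma intervalIntegrable_sub_rpow_sub_one {γ : ℝ} (hγ : 0 < γ) (T a b : ℝ) :
    IntervalIntegrable (fun u ↦ (T - u) ^ (γ - 1)) volume a b := by
  simpa using (intervalIntegrable_rpow' (by linarith) (a := T - a) (b := T - b)).comp_sub_left T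

lemma rpow_mul_rpow_le_of_nonpos {p a b : ℝ} (hp : p ≤ 0) (ha : 0 < a) (hb : 0 < b) :
    a ^ p * b ^ p ≤ ((a + b) / 2) ^ p * (a ^ p + b ^ p) := by
  wlog hab : a ≤ b generalizing a b
  · rw [mul_comm, add_comm a, add_comm (a ^ p)]
    exact this hb ha (le_of_not_ge hab)
  have hmid : b ^ p ≤ ((a + b) / 2) ^ p :=
    Real.rpow_le_rpow_of_nonpos (by positivity) (by linarith) hp
  have ha' : 0 ≤ a ^ p := by positivity
  have hb' : 0 ≤ b ^ p := by positivity
  nlinarith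

theorem setIntegral_le_of_le_rpow_mul_rpow {f : ℝ → ℝ} {C γ T s t : ℝ} (hT : 0 < T)
    (hC : 0 ≤ C) (hγ0 : 0 < γ) (hγ1 : γ ≤ 1) (hf0 : ∀ u ∈ Ioo 0 T, 0 ≤ f u)
    (hf : ∀ u ∈ Ioo 0 T, f u ≤ C * u ^ (γ - 1) * (T - u) ^ (γ - 1))
    (hs : 0 ≤ s) (hst : s ≤ t) (htT : t ≤ T) :
    ∫ u in Ioc s t ∩ Ioo 0 T, f u ≤ 2 * C * (T / 2) ^ (γ - 1) / γ * (t - s) ^ γ := by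
  set K := C * (T / 2) ^ (γ - 1)
  set g : ℝ → ℝ := fun u ↦ K * (u ^ (γ - 1) + (T - u) ^ (γ - 1))
  have hγ : (-1 : ℝ) < γ - 1 := by linarith
  have hg : IntegrableOn g (Ioc s t) := by
    refine (intervalIntegrable_iff_integrableOn_Ioc_of_le hst).1 (.const_mul ?_ K)
    exact (intervalIntegrable_rpow' hγ).add (intervalIntegrable_sub_rpow_sub_one hγ0 T s t)
  have hg0 : ∀ u ∈ Ioc s t, 0 ≤ g u := fun u hu ↦
    mul_nonneg (mul_nonneg hC (by positivity)) (add_nonneg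
      (Real.rpow_nonneg (hs.trans hu.1.le) _) (Real.rpow_nonneg (by linarith [hu.2]) _))
  have hfg : ∀ u ∈ Ioo 0 T, f u ≤ g u := fun u hu ↦ by
    have h := rpow_mul_rpow_le_of_nonpos (p := γ - 1) (by linarith) hu.1 (sub_pos.2 hu.2)
    rw [add_sub_cancel] at h
    calc f u ≤ C * (u ^ (γ - 1) * (T - u) ^ (γ - 1)) := (hf u hu).trans_eq (mul_assoc ..)
      _ ≤ g u := (mul_le_mul_of_nonneg_left h hC).trans_eq (mul_assoc ..).symm
  have hI : MeasurableSet (Ioc s t ∩ Ioo 0 T) := measurableSet_Ioc.inter measurableSet_Ioo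
  calc ∫ u in Ioc s t ∩ Ioo 0 T, f u ≤ ∫ u in Ioc s t ∩ Ioo 0 T, g u :=
        integral_mono_of_nonneg (ae_restrict_of_forall_mem hI fun u hu ↦ hf0 u hu.2)
          (hg.mono_set inter_subset_left) (ae_restrict_of_forall_mem hI fun u hu ↦ hfg u hu.2)
    _ ≤ ∫ u in Ioc s t, g u := setIntegral_mono_set hg
        (ae_restrict_of_forall_mem measurableSet_Ioc hg0) inter_subset_left.eventuallyLE
    _ = K * ((∫ u in s..t, u ^ (γ - 1)) + ∫ u in s..t, (T - u) ^ (γ - 1)) := by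
      rw [← integral_of_le hst, intervalIntegral.integral_const_mul,
        integral_add (intervalIntegrable_rpow' hγ) (intervalIntegrable_sub_rpow_sub_one hγ0 T s t)]
    _ ≤ K * ((t - s) ^ γ / γ + (t - s) ^ γ / γ) := by
      gcongr
      exacts [integral_rpow_sub_one_le hγ0 hγ1 hs hst, integral_sub_rpow_sub_one_le hγ0 hγ1 hst htT]
    _ = 2 * C * (T / 2) ^ (γ - 1) / γ * (t - s) ^ γ := by ring

theorem infimum_time_cdf_holder_general
    {Ω : Type*} [MeasurableSpace Ω] (μ : Measure Ω)
    (ζ : Ω → ℝ)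
    (T C γ : ℝ) (hT : 0 < T) (hC : 0 < C) (hγ0 : 0 < γ) (hγ1 : γ < 1)
    (n₁ n₂ : ℝ → ℝ)
    (hn₁pos : ∀ s ∈ Set.Ioc (0:ℝ) T, 0 < n₁ s)
    (hn₂pos : ∀ s ∈ Set.Ioc (0:ℝ) T, 0 < n₂ s)
    (hbound : ∀ s ∈ Set.Ioo (0:ℝ) T,
      n₁ s * n₂ (T - s) ≤ C * s ^ (γ - 1) * (T - s) ^ (γ - 1))
    (hdens : ∀ s t : ℝ, 0 ≤ s → s ≤ t → t ≤ T →
      (μ {ω | ζ ω ≤ t}).toReal - (μ {ω | ζ ω ≤ s}).toReal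
        = ∫ u in Set.Ioc s t ∩ Set.Ioo 0 T, n₁ u * n₂ (T - u)) :
    ∃ C' > 0, ∀ s t : ℝ, 0 ≤ s → s ≤ t → t ≤ T →
      (μ {ω | ζ ω ≤ t}).toReal - (μ {ω | ζ ω ≤ s}).toReal ≤ C' * (t - s) ^ γ := by
  have hdens_nonneg : ∀ u ∈ Ioo 0 T, 0 ≤ n₁ u * n₂ (T - u) := fun u hu ↦
    mul_nonneg (hn₁pos u ⟨hu.1, hu.2.le⟩).le
      (hn₂pos (T - u) ⟨sub_pos.2 hu.2, by linarith [hu.1]⟩).le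
  refine ⟨2 * C * (T / 2) ^ (γ - 1) / γ, by positivity, fun s t hs hst htT ↦ ?_⟩
  rw [hdens s t hs hst htT]
  exact setIntegral_le_of_le_rpow_mul_rpow hT hC.le hγ0 hγ1.le hdens_nonneg hbound hs hst htT

/-- Hölder continuity of the distribution function of the time of the infimum:
if `ζ` has density `s ↦ n̲(s)·n̄(T−s)` on `(0,T)` with `n̲, n̄` positive and
non-increasing on `(0,T]` and `n̲(s)n̄(T−s) ≤ C s^{γ−1}(T−s)^{γ−1}`, then there is
`C' > 0` with `P(ζ ≤ t) − P(ζ ≤ s) ≤ C'(t−s)^γ` for all `0 ≤ s ≤ t ≤ T`. -/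
theorem infimum_time_cdf_holder
    {Ω : Type*} [MeasurableSpace Ω] (μ : Measure Ω) [IsProbabilityMeasure μ]
    (ζ : Ω → ℝ) (hζ : Measurable ζ)
    (T C γ : ℝ) (hT : 0 < T) (hC : 0 < C) (hγ0 : 0 < γ) (hγ1 : γ < 1)
    (n₁ n₂ : ℝ → ℝ)
    (hn₁pos : ∀ s ∈ Set.Ioc (0:ℝ) T, 0 < n₁ s)
    (hn₂pos : ∀ s ∈ Set.Ioc (0:ℝ) T, 0 < n₂ s)
    (hn₁mono : AntitoneOn n₁ (Set.Ioc (0:ℝ) T))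
    (hn₂mono : AntitoneOn n₂ (Set.Ioc (0:ℝ) T))
    (hbound : ∀ s ∈ Set.Ioo (0:ℝ) T,
      n₁ s * n₂ (T - s) ≤ C * s ^ (γ - 1) * (T - s) ^ (γ - 1))
    (hdens : ∀ s t : ℝ, 0 ≤ s → s ≤ t → t ≤ T →
      (μ {ω | ζ ω ≤ t}).toReal - (μ {ω | ζ ω ≤ s}).toReal
        = ∫ u in Set.Ioc s t ∩ Set.Ioo 0 T, n₁ u * n₂ (T - u)) :
    ∃ C' > 0, ∀ s t : ℝ, 0 ≤ s → s ≤ t → t ≤ T →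
      (μ {ω | ζ ω ≤ t}).toReal - (μ {ω | ζ ω ≤ s}).toReal ≤ C' * (t - s) ^ γ :=
  infimum_time_cdf_holder_general μ ζ T C γ hT hC hγ0 hγ1 n₁ n₂ hn₁pos hn₂pos hbound hdens
end
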